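/- Let A be a line arrangement in ℝ² with |A| = n lines, and let ν(A) = min{ max{m(A)−1, p(A)}, min{n − m(A) + 1, n − p(A)} }. If 0 < d < ν(A), then there is no polynomial vector field of degree exactly d fixing every line of A (i.e., D_d(A) = ∅). -/

import Mathlib

open MvPolynomial

/-- Evaluation of a bivariate polynomial at a point of `ℝ × ℝ`
(the variable `X 0` is `x`, the variable `X 1` is `y`). -/
noncomputable def pev (P : MvPolynomial (Fin 2) ℝ) (q : ℝ × ℝ) : ℝ :=
  MvPolynomial.eval ![q.1, q.2] P

/-- The line `{(x, y) | a * x + b * y + c = 0}`. -/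
def lineSet (a b c : ℝ) : Set (ℝ × ℝ) := {q : ℝ × ℝ | a * q.1 + b * q.2 + c = 0}

/-- A subset of `ℝ²` is a line if it is the zero set of an affine form
`a * x + b * y + c` with `(a, b) ≠ (0, 0)`. -/
def IsLine (L : Set (ℝ × ℝ)) : Prop :=
  ∃ a b c : ℝ, (a, b) ≠ (0, 0) ∧ L = lineSet a b c

/-- The line `L` is invariant by the polynomial vector field `χ = P ∂x + Q ∂y`:
for a defining affine form `a * x + b * y + c` of `L`, the polynomial
`a * P + b * Q` vanishes at every point of `L`. -/
def InvLine (P Q : MvPolynomial (Fin 2) ℝ) (L : Set (ℝ × ℝ)) : Prop :=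
  ∃ a b c : ℝ, (a, b) ≠ (0, 0) ∧ L = lineSet a b c ∧
    ∀ q ∈ L, a * pev P q + b * pev Q q = 0

open scoped Classical in
/-- The number of lines of the arrangement `A` passing through the point `q`. -/
noncomputable def numThrough (A : Finset (Set (ℝ × ℝ))) (q : ℝ × ℝ) : ℕ :=
  (A.filter (fun L => q ∈ L)).card

/-- `mArr A` is the maximal number of lines of `A` passing through a common point. -/
noncomputable def mArr (A : Finset (Set (ℝ × ℝ))) : ℕ :=
  sSup (Set.range (numThrough A))

/-- Two lines are parallel if they are equal or disjoint. -/
def ParLines (L L' : Set (ℝ × ℝ)) : Prop := L = L' ∨ L ∩ L' = ∅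

/-- `pArr A` is the maximal number of pairwise parallel lines in `A`. -/
noncomputable def pArr (A : Finset (Set (ℝ × ℝ))) : ℕ :=
  sSup {k : ℕ | ∃ S : Finset (Set (ℝ × ℝ)), S ⊆ A ∧
    (∀ L ∈ S, ∀ L' ∈ S, ParLines L L') ∧ S.card = k}

/-!
A nonzero polynomial vanishing on `k` distinct lines has total degree at least `k`: it is
divisible by the affine form of each line in turn.

If `m ≥ d + 2` lines pass through `q`, then `(x - q₁) Q - (y - q₂) P`, of degree `≤ d + 1`,
vanishes on all of them, hence is zero; so `χ = g ((x - q₁) ∂x + (y - q₂) ∂y)` with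
`deg g = d - 1`, and `g` vanishes on each of the `n - m` lines missing `q`, so `n - m ≤ d - 1`.
If `p > d` lines are parallel with normal `(a, b)`, then `a P + b Q` vanishes on them, hence is
zero; so `χ = g (b ∂x - a ∂y)` with `deg g ≤ d`, and `g` vanishes on the `n - p` other lines,
so `n - p ≤ d`. Both conclusions contradict `d < ν(A)`.
-/

lemma ne_zero_or_ne_zero_of_pair_ne_zero {a b : ℝ} (hab : (a, b) ≠ (0, 0)) : a ≠ 0 ∨ b ≠ 0 :=
  not_and_or.mp fun h => hab (by rw [h.1, h.2])

lemma sq_add_sq_ne_zero {a b : ℝ} (hab : (a, b) ≠ (0, 0)) : a ^ 2 + b ^ 2 ≠ 0 := by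
  rcases ne_zero_or_ne_zero_of_pair_ne_zero hab with h | h <;> positivity

lemma det_eq_zero_of_orthogonal {a b u v u' v' : ℝ} (hab : (a, b) ≠ (0, 0))
    (h : a * u + b * v = 0) (h' : a * u' + b * v' = 0) : u * v' - u' * v = 0 := by
  rcases ne_zero_or_ne_zero_of_pair_ne_zero hab with ha | hb
  · exact (mul_eq_zero.1 (by linear_combination v' * h - v * h')).resolve_left ha
  · exact (mul_eq_zero.1 (by linear_combination u * h' - u' * h)).resolve_left hb

lemma orthogonal_of_det_eq_zero {a b a' b' u v : ℝ} (hab : (a, b) ≠ (0, 0))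
    (hdet : a * b' - a' * b = 0) (h : a * u + b * v = 0) : a' * u + b' * v = 0 := by
  rcases ne_zero_or_ne_zero_of_pair_ne_zero hab with ha | hb
  · exact (mul_eq_zero.1 (by linear_combination a' * h + v * hdet)).resolve_left ha
  · exact (mul_eq_zero.1 (by linear_combination b' * h - u * hdet)).resolve_left hb

@[simp]
lemma mem_lineSet {a b c : ℝ} {q : ℝ × ℝ} : q ∈ lineSet a b c ↔ a * q.1 + b * q.2 + c = 0 :=
  Iff.rfl

lemma exists_mem_lineSet {a b c : ℝ} (hab : (a, b) ≠ (0, 0)) : ∃ q, q ∈ lineSet a b c :=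
  ⟨(-a * c / (a ^ 2 + b ^ 2), -b * c / (a ^ 2 + b ^ 2)), by
    simp only [mem_lineSet]; field_simp [sq_add_sq_ne_zero hab]; ring⟩

lemma exists_mem_lineSet_inter {a b c a' b' c' : ℝ} (hdet : a * b' - a' * b ≠ 0) :
    ∃ q, q ∈ lineSet a b c ∩ lineSet a' b' c' :=
  ⟨((b * c' - b' * c) / (a * b' - a' * b), (a' * c - a * c') / (a * b' - a' * b)), by
    simp only [Set.mem_inter_iff, mem_lineSet]
    constructor <;>
    · rw [mul_div_assoc', mul_div_assoc', ← add_div, div_add' _ _ _ hdet, div_eq_zero_iff]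
      exact Or.inl (by ring)⟩

lemma det_eq_zero_of_mem_inter {a b c a' b' c' : ℝ} {p q : ℝ × ℝ} (hpq : p ≠ q)
    (hp : p ∈ lineSet a b c ∩ lineSet a' b' c') (hq : q ∈ lineSet a b c ∩ lineSet a' b' c') :
    a * b' - a' * b = 0 := by
  simp only [Set.mem_inter_iff, mem_lineSet] at hp hq
  have hpq' : (p.1 - q.1, p.2 - q.2) ≠ (0, 0) := by
    simpa [sub_eq_zero, Prod.ext_iff] using hpq
  exact det_eq_zero_of_orthogonal hpq' (by linear_combination hp.1 - hq.1)
    (by linear_combination hp.2 - hq.2)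

lemma det_eq_zero_of_lineSet_eq {a b c a' b' c' : ℝ} (hab : (a, b) ≠ (0, 0))
    (h : lineSet a b c = lineSet a' b' c') : a * b' - a' * b = 0 := by
  obtain ⟨p, hp⟩ := exists_mem_lineSet (c := c) hab
  have hp' : (p.1 + b, p.2 - a) ∈ lineSet a b c := by
    simp only [mem_lineSet] at hp ⊢; linear_combination hp
  refine det_eq_zero_of_mem_inter (q := (p.1 + b, p.2 - a)) (fun hpq => hab ?_)
    ⟨hp, h ▸ hp⟩ ⟨hp', h ▸ hp'⟩
  simp only [Prod.ext_iff, left_eq_add] at hpq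
  exact Prod.ext (by linarith [hpq.2]) hpq.1

lemma lineSet_eq_of_det_eq_zero {a b c a' b' c' : ℝ} (hab : (a, b) ≠ (0, 0))
    (hab' : (a', b') ≠ (0, 0)) (hdet : a * b' - a' * b = 0) {q : ℝ × ℝ}
    (hq : q ∈ lineSet a b c ∩ lineSet a' b' c') : lineSet a b c = lineSet a' b' c' := by
  obtain ⟨hq, hq'⟩ := hq
  rw [mem_lineSet] at hq hq'
  ext r
  simp only [mem_lineSet]
  constructor <;> intro hr
  · linear_combination hq' + orthogonal_of_det_eq_zero (a' := a') (b' := b')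
      (u := r.1 - q.1) (v := r.2 - q.2) hab hdet (by linear_combination hr - hq)
  · linear_combination hq + orthogonal_of_det_eq_zero (a' := a) (b' := b)
      (u := r.1 - q.1) (v := r.2 - q.2) hab' (by linear_combination -hdet)
      (by linear_combination hr - hq')

lemma parLines_lineSet_iff {a b c a' b' c' : ℝ} (hab : (a, b) ≠ (0, 0))
    (hab' : (a', b') ≠ (0, 0)) :
    ParLines (lineSet a b c) (lineSet a' b' c') ↔ a * b' - a' * b = 0 := by
  refine ⟨?_, fun hdet => ?_⟩
  · rintro (heq | hdisj)
    · exact det_eq_zero_of_lineSet_eq hab heq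
    · by_contra hdet
      obtain ⟨q, hq⟩ := exists_mem_lineSet_inter (c := c) (c' := c') hdet
      exact hdisj.subset hq
  · by_cases hq : ∃ q, q ∈ lineSet a b c ∩ lineSet a' b' c'
    · obtain ⟨q, hq⟩ := hq
      exact Or.inl (lineSet_eq_of_det_eq_zero hab hab' hdet hq)
    · exact Or.inr (Set.eq_empty_of_forall_notMem fun q hq' => hq ⟨q, hq'⟩)

lemma ParLines.symm {L L' : Set (ℝ × ℝ)} (h : ParLines L L') : ParLines L' L :=
  h.imp Eq.symm (fun h => Set.inter_comm L L' ▸ h)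

lemma ParLines.trans {L₁ L₂ L₃ : Set (ℝ × ℝ)} (h₁ : IsLine L₁) (h₂ : IsLine L₂) (h₃ : IsLine L₃)
    (h₁₂ : ParLines L₁ L₂) (h₂₃ : ParLines L₂ L₃) : ParLines L₁ L₃ := by
  obtain ⟨a₁, b₁, c₁, hab₁, rfl⟩ := h₁
  obtain ⟨a₂, b₂, c₂, hab₂, rfl⟩ := h₂
  obtain ⟨a₃, b₃, c₃, hab₃, rfl⟩ := h₃
  rw [parLines_lineSet_iff hab₁ hab₂] at h₁₂
  rw [parLines_lineSet_iff hab₂ hab₃] at h₂₃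
  rw [parLines_lineSet_iff hab₁ hab₃]
  -- `(a₂, b₂) ⊥ (b₃, -a₃)` and `(a₁, b₁) ∥ (a₂, b₂)`, so `(a₁, b₁) ⊥ (b₃, -a₃)`.
  linear_combination orthogonal_of_det_eq_zero (a' := a₁) (b' := b₁) (u := b₃) (v := -a₃) hab₂
    (by linear_combination -h₁₂) (by linear_combination h₂₃)

lemma inter_subsingleton_of_ne {L L' : Set (ℝ × ℝ)} (hL : IsLine L) (hL' : IsLine L')
    (hne : L ≠ L') : (L ∩ L').Subsingleton := by
  obtain ⟨a, b, c, hab, rfl⟩ := hL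
  obtain ⟨a', b', c', hab', rfl⟩ := hL'
  intro p hp q hq
  by_contra hpq
  rcases (parLines_lineSet_iff hab hab').2 (det_eq_zero_of_mem_inter hpq hp hq) with heq | hdisj
  · exact hne heq
  · exact hdisj.subset hp

section

variable {σ R : Type*} [DecidableEq σ] [CommRing R]

theorem X_sub_dvd_sub_bind₁_update (i : σ) (p f : MvPolynomial σ R) :
    X i - p ∣ f - bind₁ (Function.update X i p) f := by
  rw [← Ideal.mem_span_singleton, ← Ideal.Quotient.eq]
  suffices h : (Ideal.Quotient.mkₐ R _).comp (bind₁ (Function.update X i p)) =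
      Ideal.Quotient.mkₐ R (Ideal.span {X i - p}) from (DFunLike.congr_fun h f).symm
  refine algHom_ext fun j => ?_
  rcases eq_or_ne j i with rfl | hj
  · simp only [AlgHom.comp_apply, bind₁_X_right, Function.update_self]
    exact (Ideal.Quotient.eq.2 (Ideal.mem_span_singleton_self _)).symm
  · simp [Function.update_of_ne hj]

theorem X_sub_dvd_of_eval_update_eq_zero [IsDomain R] {i : σ} {p f : MvPolynomial σ R}
    (S : σ → Set R) (hS : ∀ j, (S j).Infinite)
    (h : ∀ v ∈ Set.pi Set.univ S, eval (Function.update v i (eval v p)) f = 0) : X i - p ∣ f := by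
  have hsubst : bind₁ (Function.update X i p) f = 0 := by
    refine funext_set S hS fun v hv => ?_
    have hupdate : (fun j => eval v (Function.update X i p j)) =
        Function.update v i (eval v p) := by
      ext j
      rw [Function.apply_update (fun _ => eval v) X i p j]
      simp
    rw [map_zero, ← h v hv, ← hupdate]
    exact aeval_bind₁ v _ f
  simpa [hsubst] using X_sub_dvd_sub_bind₁_update i p f

end

noncomputable def affineForm (a b c : ℝ) : MvPolynomial (Fin 2) ℝ :=
  C a * X 0 + C b * X 1 + C c

@[simp]
lemma pev_affineForm (a b c : ℝ) (q : ℝ × ℝ) :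
    pev (affineForm a b c) q = a * q.1 + b * q.2 + c := by
  simp [pev, affineForm]

@[simp]
lemma pev_mul (f g : MvPolynomial (Fin 2) ℝ) (q : ℝ × ℝ) : pev (f * g) q = pev f q * pev g q :=
  map_mul _ f g

@[simp]
lemma pev_add (f g : MvPolynomial (Fin 2) ℝ) (q : ℝ × ℝ) : pev (f + g) q = pev f q + pev g q :=
  map_add _ f g

@[simp]
lemma pev_sub (f g : MvPolynomial (Fin 2) ℝ) (q : ℝ × ℝ) : pev (f - g) q = pev f q - pev g q :=
  map_sub _ f g

@[simp]
lemma pev_neg (f : MvPolynomial (Fin 2) ℝ) (q : ℝ × ℝ) : pev (-f) q = -pev f q :=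
  map_neg _ f

@[simp]
lemma pev_zero (q : ℝ × ℝ) : pev 0 q = 0 :=
  map_zero _

@[simp]
lemma pev_C (r : ℝ) (q : ℝ × ℝ) : pev (C r) q = r :=
  eval_C r

lemma totalDegree_C_mul_le (r : ℝ) (f : MvPolynomial (Fin 2) ℝ) :
    (C r * f).totalDegree ≤ f.totalDegree :=
  (totalDegree_mul _ _).trans (by rw [totalDegree_C, zero_add])

lemma affineForm_eq_C_mul_X_zero_sub {a b c : ℝ} (ha : a ≠ 0) :
    affineForm a b c = C a * (X 0 - (C (-b / a) * X 1 + C (-c / a))) := by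
  have hb : C a * C (-b / a) = (-C b : MvPolynomial (Fin 2) ℝ) := by
    rw [← map_mul, ← map_neg, mul_div_cancel₀ _ ha]
  have hc : C a * C (-c / a) = (-C c : MvPolynomial (Fin 2) ℝ) := by
    rw [← map_mul, ← map_neg, mul_div_cancel₀ _ ha]
  rw [affineForm]
  linear_combination X 1 * hb + hc

lemma affineForm_eq_C_mul_X_one_sub {a b c : ℝ} (hb : b ≠ 0) :
    affineForm a b c = C b * (X 1 - (C (-a / b) * X 0 + C (-c / b))) := by
  have ha : C b * C (-a / b) = (-C a : MvPolynomial (Fin 2) ℝ) := by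
    rw [← map_mul, ← map_neg, mul_div_cancel₀ _ hb]
  have hc : C b * C (-c / b) = (-C c : MvPolynomial (Fin 2) ℝ) := by
    rw [← map_mul, ← map_neg, mul_div_cancel₀ _ hb]
  rw [affineForm]
  linear_combination X 0 * ha + hc

theorem affineForm_dvd_of_eqOn_diff_finite {a b c : ℝ} (hab : (a, b) ≠ (0, 0))
    {E : Set (ℝ × ℝ)} (hE : E.Finite) {f : MvPolynomial (Fin 2) ℝ}
    (hf : ∀ q ∈ lineSet a b c \ E, pev f q = 0) : affineForm a b c ∣ f := by
  rcases ne_zero_or_ne_zero_of_pair_ne_zero hab with ha | hb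
  · set p : MvPolynomial (Fin 2) ℝ := C (-b / a) * X 1 + C (-c / a)
    rw [affineForm_eq_C_mul_X_zero_sub ha, ((isUnit_iff_ne_zero.2 ha).map C).mul_left_dvd]
    refine X_sub_dvd_of_eval_update_eq_zero ![Set.univ, (Prod.snd '' E)ᶜ]
      (fun j => by fin_cases j; exacts [Set.infinite_univ, (hE.image _).infinite_compl])
      fun v hv => ?_
    have hv1 : v 1 ∉ Prod.snd '' E := by simpa using hv 1 (Set.mem_univ _)
    have hupdate : Function.update v 0 (eval v p) = ![-b / a * v 1 + -c / a, v 1] := by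
      ext j; fin_cases j <;> simp [p]
    rw [hupdate]
    refine hf (-b / a * v 1 + -c / a, v 1) ⟨?_, fun hq => hv1 ⟨_, hq, rfl⟩⟩
    simp only [mem_lineSet]
    field_simp
    ring
  · set p : MvPolynomial (Fin 2) ℝ := C (-a / b) * X 0 + C (-c / b)
    rw [affineForm_eq_C_mul_X_one_sub hb, ((isUnit_iff_ne_zero.2 hb).map C).mul_left_dvd]
    refine X_sub_dvd_of_eval_update_eq_zero ![(Prod.fst '' E)ᶜ, Set.univ]
      (fun j => by fin_cases j; exacts [(hE.image _).infinite_compl, Set.infinite_univ])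
      fun v hv => ?_
    have hv0 : v 0 ∉ Prod.fst '' E := by simpa using hv 0 (Set.mem_univ _)
    have hupdate : Function.update v 1 (eval v p) = ![v 0, -a / b * v 0 + -c / b] := by
      ext j; fin_cases j <;> simp [p]
    rw [hupdate]
    refine hf (v 0, -a / b * v 0 + -c / b) ⟨?_, fun hq => hv0 ⟨_, hq, rfl⟩⟩
    simp only [mem_lineSet]
    field_simp
    ring

theorem eqOn_lineSet_of_affineForm_dvd {a b c : ℝ} {f : MvPolynomial (Fin 2) ℝ}
    (h : affineForm a b c ∣ f) : ∀ q ∈ lineSet a b c, pev f q = 0 := by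
  obtain ⟨g, rfl⟩ := h
  intro q hq
  rw [pev_mul, pev_affineForm, hq, zero_mul]

theorem totalDegree_affineForm {a b c : ℝ} (hab : (a, b) ≠ (0, 0)) :
    (affineForm a b c).totalDegree = 1 := by
  refine le_antisymm ?_ (Nat.one_le_iff_ne_zero.2 fun h => ?_)
  · refine (totalDegree_add _ _).trans
      (max_le ((totalDegree_add _ _).trans (max_le ?_ ?_)) (by simp)) <;>
      exact (totalDegree_mul _ _).trans (by simp [totalDegree_X])
  · have hk := totalDegree_eq_zero_iff_eq_C.1 h
    have h0 := congrArg (pev · (0, 0)) hk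
    have h1 := congrArg (pev · (a, b)) hk
    simp only [pev_affineForm] at h0 h1
    simp only [pev, eval_C] at h0 h1
    exact sq_add_sq_ne_zero hab (by linear_combination h1 - h0)

theorem affineForm_ne_zero {a b c : ℝ} (hab : (a, b) ≠ (0, 0)) : affineForm a b c ≠ 0 := by
  intro h
  simpa [h] using totalDegree_affineForm (c := c) hab

theorem totalDegree_affineForm_mul {a b c : ℝ} (hab : (a, b) ≠ (0, 0))
    {g : MvPolynomial (Fin 2) ℝ} (hg : g ≠ 0) :
    (affineForm a b c * g).totalDegree = g.totalDegree + 1 := by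
  rw [totalDegree_mul_of_isDomain (affineForm_ne_zero hab) hg, totalDegree_affineForm hab,
    add_comm]

theorem card_le_totalDegree_of_eqOn_lines {S : Finset (Set (ℝ × ℝ))} (hS : ∀ L ∈ S, IsLine L)
    {f : MvPolynomial (Fin 2) ℝ} (hf : f ≠ 0) (hfS : ∀ L ∈ S, ∀ q ∈ L, pev f q = 0) :
    S.card ≤ f.totalDegree := by
  classical
  induction S using Finset.induction_on generalizing f with
  | empty => simp
  | insert L S hLS ih =>
    obtain ⟨a, b, c, hab, rfl⟩ := hS L (Finset.mem_insert_self _ _)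
    obtain ⟨g, rfl⟩ := affineForm_dvd_of_eqOn_diff_finite hab Set.finite_empty
      fun q hq => hfS _ (Finset.mem_insert_self _ _) q hq.1
    have hg : g ≠ 0 := right_ne_zero_of_mul hf
    have hgS : ∀ L' ∈ S, ∀ q ∈ L', pev g q = 0 := by
      intro L' hL'
      obtain ⟨a', b', c', hab', rfl⟩ := hS L' (Finset.mem_insert_of_mem hL')
      -- `g` vanishes on `L'` off the at most one point of `L' ∩ L`.
      refine eqOn_lineSet_of_affineForm_dvd (affineForm_dvd_of_eqOn_diff_finite hab'
        (inter_subsingleton_of_ne ⟨a', b', c', hab', rfl⟩ (hS _ (Finset.mem_insert_self _ _))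
          (ne_of_mem_of_not_mem hL' hLS)).finite fun r ⟨hr, hrL⟩ => ?_)
      have hfr := hfS _ (Finset.mem_insert_of_mem hL') r hr
      rw [pev_mul, pev_affineForm] at hfr
      exact (mul_eq_zero.1 hfr).resolve_left fun h => hrL ⟨hr, h⟩
    rw [Finset.card_insert_of_notMem hLS, totalDegree_affineForm_mul hab hg]
    exact Nat.add_le_add_right (ih (fun L hL => hS L (Finset.mem_insert_of_mem hL)) hg hgS) 1

lemma InvLine.isLine {P Q : MvPolynomial (Fin 2) ℝ} {L : Set (ℝ × ℝ)} (h : InvLine P Q L) :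
    IsLine L :=
  let ⟨a, b, c, hab, hL, _⟩ := h
  ⟨a, b, c, hab, hL⟩

lemma numThrough_le_card (A : Finset (Set (ℝ × ℝ))) (q : ℝ × ℝ) : numThrough A q ≤ A.card := by
  classical exact Finset.card_filter_le _ _

lemma exists_numThrough_eq_mArr (A : Finset (Set (ℝ × ℝ))) : ∃ q, numThrough A q = mArr A :=
  Nat.sSup_mem (Set.range_nonempty _) ⟨A.card, Set.forall_mem_range.2 (numThrough_le_card A)⟩

lemma mArr_le_card (A : Finset (Set (ℝ × ℝ))) : mArr A ≤ A.card := by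
  obtain ⟨q, hq⟩ := exists_numThrough_eq_mArr A
  exact hq ▸ numThrough_le_card A q

lemma bddAbove_card_parallel (A : Finset (Set (ℝ × ℝ))) :
    BddAbove {k : ℕ | ∃ S : Finset (Set (ℝ × ℝ)), S ⊆ A ∧
      (∀ L ∈ S, ∀ L' ∈ S, ParLines L L') ∧ S.card = k} :=
  ⟨A.card, by rintro k ⟨S, hS, -, rfl⟩; exact Finset.card_le_card hS⟩

lemma exists_parallel_card_eq_pArr (A : Finset (Set (ℝ × ℝ))) :
    ∃ S ⊆ A, (∀ L ∈ S, ∀ L' ∈ S, ParLines L L') ∧ S.card = pArr A := by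
  refine Nat.sSup_mem ?_ (bddAbove_card_parallel A)
  exact ⟨0, ∅, Finset.empty_subset _, by simp, rfl⟩

lemma card_le_pArr {A S : Finset (Set (ℝ × ℝ))} (hSA : S ⊆ A)
    (hS : ∀ L ∈ S, ∀ L' ∈ S, ParLines L L') : S.card ≤ pArr A :=
  le_csSup (bddAbove_card_parallel A) ⟨S, hSA, hS, rfl⟩

theorem exists_radial_factor {A : Finset (Set (ℝ × ℝ))} {P Q : MvPolynomial (Fin 2) ℝ}
    (hinv : ∀ L ∈ A, InvLine P Q L) {q : ℝ × ℝ}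
    (hq : max P.totalDegree Q.totalDegree + 2 ≤ numThrough A q) :
    ∃ g, P = affineForm 1 0 (-q.1) * g ∧ Q = affineForm 0 1 (-q.2) * g := by
  classical
  have hu : ((1 : ℝ), (0 : ℝ)) ≠ (0, 0) := by simp
  have hv : ((0 : ℝ), (1 : ℝ)) ≠ (0, 0) := by simp
  have hD : affineForm 1 0 (-q.1) * Q - affineForm 0 1 (-q.2) * P = 0 := by
    by_contra hD
    have hdeg : (affineForm 1 0 (-q.1) * Q - affineForm 0 1 (-q.2) * P).totalDegree ≤
        max P.totalDegree Q.totalDegree + 1 := by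
      refine (totalDegree_sub _ _).trans (max_le ?_ ?_) <;> refine (totalDegree_mul _ _).trans ?_
      · rw [totalDegree_affineForm hu]; omega
      · rw [totalDegree_affineForm hv]; omega
    have hcard := card_le_totalDegree_of_eqOn_lines (S := A.filter (q ∈ ·))
      (fun L hL => (hinv L (Finset.mem_filter.1 hL).1).isLine) hD fun L hL r hr => ?_
    · change (A.filter (q ∈ ·)).card ≥ _ at hq
      omega
    obtain ⟨hLA, hqL⟩ := Finset.mem_filter.1 hL
    obtain ⟨a, b, c, hab, rfl, hPQ⟩ := hinv L hLA
    have hPQr := hPQ r hr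
    rw [mem_lineSet] at hr hqL
    have hdet := det_eq_zero_of_orthogonal (u := r.1 - q.1) (v := r.2 - q.2) hab
      (by linear_combination hr - hqL) hPQr
    simp only [pev_sub, pev_mul, pev_affineForm]
    linear_combination hdet
  have huP : affineForm 1 0 (-q.1) ∣ P := by
    refine affineForm_dvd_of_eqOn_diff_finite hu (Set.finite_singleton q) fun r ⟨hr, hrq⟩ => ?_
    -- On the line `x = q₁`, `hD` reads `(y - q₂) P = 0`.
    have hDr := congrArg (pev · r) hD
    simp only [pev_sub, pev_mul, pev_affineForm, pev_zero] at hDr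
    rw [mem_lineSet] at hr
    have hr₂ : r.2 - q.2 ≠ 0 := fun h => hrq (Prod.ext (by linarith) (by linarith))
    exact (mul_eq_zero.1 (by linear_combination -hDr + pev Q r * hr :
      (r.2 - q.2) * pev P r = 0)).resolve_left hr₂
  obtain ⟨g, rfl⟩ := huP
  exact ⟨g, rfl, mul_left_cancel₀ (affineForm_ne_zero hu) (by linear_combination hD)⟩

theorem card_lt_numThrough_add {A : Finset (Set (ℝ × ℝ))} {P Q : MvPolynomial (Fin 2) ℝ}
    {d : ℕ} {q : ℝ × ℝ} (hinv : ∀ L ∈ A, InvLine P Q L)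
    (hdeg : max P.totalDegree Q.totalDegree = d) (hd : 0 < d) (hq : d + 2 ≤ numThrough A q) :
    A.card < numThrough A q + d := by
  classical
  obtain ⟨g, rfl, rfl⟩ := exists_radial_factor (q := q) hinv (by omega)
  have hg : g ≠ 0 := by rintro rfl; simp at hdeg; omega
  have hgdeg : g.totalDegree + 1 ≤ d := by
    rw [← totalDegree_affineForm_mul (a := 1) (b := 0) (c := -q.1) (by simp) hg]
    exact hdeg ▸ le_max_left _ _
  have hfar := card_le_totalDegree_of_eqOn_lines (S := A.filter (q ∉ ·))
    (fun L hL => (hinv L (Finset.mem_filter.1 hL).1).isLine) hg fun L hL r hr => ?_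
  · have hsplit := Finset.card_filter_add_card_filter_not (s := A) (q ∈ ·)
    change A.card < (A.filter (q ∈ ·)).card + d
    omega
  obtain ⟨hLA, hqL⟩ := Finset.mem_filter.1 hL
  obtain ⟨a, b, c, hab, rfl, hPQ⟩ := hinv L hLA
  have hPQr := hPQ r hr
  simp only [pev_mul, pev_affineForm] at hPQr
  rw [mem_lineSet] at hr hqL
  exact (mul_eq_zero.1 (by linear_combination pev g r * hr - hPQr :
    (a * q.1 + b * q.2 + c) * pev g r = 0)).resolve_left hqL

theorem exists_parallel_factor {S : Finset (Set (ℝ × ℝ))} {P Q : MvPolynomial (Fin 2) ℝ}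
    {a b c : ℝ} (hab : (a, b) ≠ (0, 0)) (hpar : ∀ L ∈ S, ParLines (lineSet a b c) L)
    (hinv : ∀ L ∈ S, InvLine P Q L) (hcard : max P.totalDegree Q.totalDegree < S.card) :
    ∃ g : MvPolynomial (Fin 2) ℝ,
      g.totalDegree ≤ max P.totalDegree Q.totalDegree ∧ P = C b * g ∧ Q = -(C a * g) := by
  have hR : C a * P + C b * Q = 0 := by
    by_contra hR
    have hdeg : (C a * P + C b * Q).totalDegree ≤ max P.totalDegree Q.totalDegree :=
      (totalDegree_add _ _).trans (max_le_max (totalDegree_C_mul_le _ _) (totalDegree_C_mul_le _ _))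
    refine absurd (card_le_totalDegree_of_eqOn_lines (fun L hL => (hinv L hL).isLine) hR ?_)
      (by omega)
    intro L hL r hr
    obtain ⟨a', b', c', hab', rfl, hPQ⟩ := hinv L hL
    have hdet := (parLines_lineSet_iff hab hab').1 (hpar _ hL)
    simpa using orthogonal_of_det_eq_zero (a' := a) (b' := b) hab' (by linear_combination -hdet)
      (hPQ r hr)
  have he : C (a ^ 2 + b ^ 2)⁻¹ * (C a ^ 2 + C b ^ 2) = (1 : MvPolynomial (Fin 2) ℝ) := by
    rw [← map_pow, ← map_pow, ← map_add, ← map_mul, inv_mul_cancel₀ (sq_add_sq_ne_zero hab),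
      map_one]
  -- `(P, Q) ⊥ (a, b)`, so `(P, Q)` is its own projection onto `(b, -a)`.
  refine ⟨C (a ^ 2 + b ^ 2)⁻¹ * (C b * P - C a * Q), ?_, ?_, ?_⟩
  · exact (totalDegree_C_mul_le _ _).trans ((totalDegree_sub _ _).trans
      (max_le_max (totalDegree_C_mul_le _ _) (totalDegree_C_mul_le _ _)))
  · linear_combination (C (a ^ 2 + b ^ 2)⁻¹ * C a) * hR - P * he
  · linear_combination (C (a ^ 2 + b ^ 2)⁻¹ * C b) * hR - Q * he

lemma not_parLines_of_card_eq_pArr {A S : Finset (Set (ℝ × ℝ))} (hA : ∀ L ∈ A, IsLine L)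
    (hSA : S ⊆ A) (hS : ∀ L ∈ S, ∀ L' ∈ S, ParLines L L') (hScard : S.card = pArr A)
    {L₀ L : Set (ℝ × ℝ)} (hL₀ : L₀ ∈ S) (hLA : L ∈ A) (hLS : L ∉ S) : ¬ParLines L₀ L := by
  classical
  intro hpar
  have hLpar : ∀ L' ∈ S, ParLines L L' := fun L' hL' =>
    hpar.symm.trans (hA _ hLA) (hA _ (hSA hL₀)) (hA _ (hSA hL')) (hS _ hL₀ _ hL')
  have hins : ∀ L₁ ∈ insert L S, ∀ L₂ ∈ insert L S, ParLines L₁ L₂ := by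
    simp only [Finset.forall_mem_insert]
    exact ⟨⟨Or.inl rfl, hLpar⟩, fun L₁ h₁ => ⟨(hLpar L₁ h₁).symm, hS L₁ h₁⟩⟩
  have hle := card_le_pArr (Finset.insert_subset hLA hSA) hins
  rw [Finset.card_insert_of_notMem hLS] at hle
  omega

theorem card_le_card_add_of_parallel {A S : Finset (Set (ℝ × ℝ))} {P Q : MvPolynomial (Fin 2) ℝ}
    {d : ℕ} (hinv : ∀ L ∈ A, InvLine P Q L) (hdeg : max P.totalDegree Q.totalDegree = d)
    (hd : 0 < d) (hSA : S ⊆ A) (hS : ∀ L ∈ S, ∀ L' ∈ S, ParLines L L')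
    (hScard : S.card = pArr A) (hdS : d < S.card) : A.card ≤ S.card + d := by
  classical
  obtain ⟨L₀, hL₀⟩ := Finset.card_pos.1 (by omega : 0 < S.card)
  obtain ⟨a, b, c, hab, rfl, -⟩ := hinv L₀ (hSA hL₀)
  obtain ⟨g, hgdeg, rfl, rfl⟩ := exists_parallel_factor hab (fun L hL => hS _ hL₀ L hL)
    (fun L hL => hinv L (hSA hL)) (by omega)
  have hg : g ≠ 0 := by rintro rfl; simp at hdeg; omega
  have hfar := card_le_totalDegree_of_eqOn_lines (S := A \ S)
    (fun L hL => (hinv L (Finset.mem_sdiff.1 hL).1).isLine) hg fun L hL r hr => ?_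
  · have := Finset.card_sdiff_of_subset hSA
    have := Finset.card_le_card hSA
    omega
  obtain ⟨hLA, hLS⟩ := Finset.mem_sdiff.1 hL
  have hnpar := not_parLines_of_card_eq_pArr (fun L hL => (hinv L hL).isLine) hSA hS hScard
    hL₀ hLA hLS
  obtain ⟨a', b', c', hab', rfl, hPQ⟩ := hinv L hLA
  have hdet : a * b' - a' * b ≠ 0 := fun h => hnpar ((parLines_lineSet_iff hab hab').2 h)
  have hPQr := hPQ r hr
  simp only [pev_mul, pev_neg, pev_C] at hPQr
  exact (mul_eq_zero.1 (by linear_combination -hPQr :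
    (a * b' - a' * b) * pev g r = 0)).resolve_left hdet

theorem no_fixing_field_below_nu_general
    (A : Finset (Set (ℝ × ℝ))) (d : ℕ)
    (hd0 : 0 < d)
    (hd : d < min (max (mArr A - 1) (pArr A))
            (min (A.card - mArr A + 1) (A.card - pArr A))) :
    ¬∃ P Q : MvPolynomial (Fin 2) ℝ,
        max P.totalDegree Q.totalDegree = d ∧ ∀ L ∈ A, InvLine P Q L := by
  rintro ⟨P, Q, hdeg, hinv⟩
  simp only [lt_min_iff, lt_max_iff] at hd
  obtain ⟨hm | hp, hdm, hdp⟩ := hd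
  · obtain ⟨q, hq⟩ := exists_numThrough_eq_mArr A
    have := card_lt_numThrough_add hinv hdeg hd0 (by omega : d + 2 ≤ numThrough A q)
    have := mArr_le_card A
    omega
  · obtain ⟨S, hSA, hS, hScard⟩ := exists_parallel_card_eq_pArr A
    have := card_le_card_add_of_parallel hinv hdeg hd0 hSA hS hScard (by omega)
    omega

/-- **Corollary.** Let `A` be a line arrangement with `n` lines and
`ν(A) = min (max (m(A) - 1) (p(A))) (min (n - m(A) + 1) (n - p(A)))`.
If `0 < d < ν(A)` then there is no polynomial vector field of degree exactly `d`
fixing every line of `A`, i.e. `D_d(A) = ∅`. -/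
theorem no_fixing_field_below_nu
    (A : Finset (Set (ℝ × ℝ))) (hA : ∀ L ∈ A, IsLine L) (d : ℕ)
    (hd0 : 0 < d)
    (hd : d < min (max (mArr A - 1) (pArr A))
            (min (A.card - mArr A + 1) (A.card - pArr A))) :
    ¬∃ P Q : MvPolynomial (Fin 2) ℝ,
        max P.totalDegree Q.totalDegree = d ∧ ∀ L ∈ A, InvLine P Q L :=
  no_fixing_field_below_nu_general A d hd0 hd
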